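/- Let 𝔅 be a bicategory, let (X, Y) be a dual pair with X : B → A and Y : A → B (unit η : id_A → X ⊙ Y and counit ε : Y ⊙ X → id_B satisfying the triangle identities), and suppose that for every 0-cell D the precomposition functor (− ⊙ X) : 𝔅(A,D) → 𝔅(B,D) admits a right adjoint (X ▷ −) : 𝔅(B,D) → 𝔅(A,D). Then Y is canonically isomorphic to X ▷ id_B, and for every 1-cell Z : B → D the canonical 2-cell Z ⊙ (X ▷ id_B) → X ▷ Z (adjoint to the map (Z ⊙ (X ▷ id_B)) ⊙ X ≅ Z ⊙ ((X ▷ id_B) ⊙ X) → Z ⊙ id_B ≅ Z induced by the counit of the adjunction defining X ▷ −) is an isomorphism. -/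

import Mathlib

/-!
A paper 1-cell `M : A → B` is `M : a ⟶ b` here, and `L ⊙ M = M ≫ L`.

The dual pair makes `(− ⊙ Y)` a second right adjoint of `(− ⊙ X)`, and adjuncts taken with
respect to two right adjoints of the same functor differ by the invertible comparison
`rightAdjointUniq`, so it suffices to compute them for `(− ⊙ Y)`. There the triangle identities
make the adjunct of `ε` the unitor `Y ≅ Y ⊙ id_B` and the adjunct of `Z ⊙ ε` the identity of
`Z ⊙ Y`. For the second claim, the counit of `X ▷ −` at `id_B` is `ε` precomposed with
`X ⊙ (inverse of the iso of the first claim)`, and adjuncts are natural in the source.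
-/

open CategoryTheory CategoryTheory.Bicategory

universe w v u

variable {B : Type u} [Bicategory.{w, v} B]

/-- Precomposition `(− ⊙ M) : 𝔅(A,C) → 𝔅(B,C)` with `M : B → A`. -/
@[simps]
def precompF {a b : B} (M : b ⟶ a) (c : B) : (a ⟶ c) ⥤ (b ⟶ c) where
  obj Z := M ≫ Z
  map θ := M ◁ θ

namespace CategoryTheory.Adjunction

variable {C D : Type*} [Category C] [Category D] {F : C ⥤ D} {G G' : D ⥤ C}

theorem homEquiv_comp_rightAdjointUniq_hom_app (adj₁ : F ⊣ G) (adj₂ : F ⊣ G') {X : C} {Y : D}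
    (f : F.obj X ⟶ Y) :
    adj₁.homEquiv X Y f ≫ (rightAdjointUniq adj₁ adj₂).hom.app Y = adj₂.homEquiv X Y f := by
  rw [homEquiv_unit, homEquiv_unit, Category.assoc, NatTrans.naturality, ← Category.assoc,
    unit_rightAdjointUniq_hom_app]

theorem isIso_homEquiv_iff (adj₁ : F ⊣ G) (adj₂ : F ⊣ G') {X : C} {Y : D} (f : F.obj X ⟶ Y) :
    IsIso (adj₁.homEquiv X Y f) ↔ IsIso (adj₂.homEquiv X Y f) := by
  rw [← homEquiv_comp_rightAdjointUniq_hom_app adj₁ adj₂]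
  exact (isIso_comp_right_iff _ _).symm

end CategoryTheory.Adjunction

namespace CategoryTheory.Bicategory

variable {a b : B} {X : b ⟶ a} {Y : a ⟶ b}

theorem associator_inv_whiskerRight_leftUnitor_of_whiskerLeft_comp_eq {d : B} {R S : a ⟶ b}
    (w : S ⟶ R) [IsIso w] {c : X ≫ R ⟶ 𝟙 b} {e : X ≫ S ⟶ 𝟙 b} (h : X ◁ w ≫ c = e)
    (Z : b ⟶ d) :
    (α_ X R Z).inv ≫ c ▷ Z ≫ (λ_ Z).hom
      = X ◁ (inv w ▷ Z) ≫ (α_ X S Z).inv ≫ e ▷ Z ≫ (λ_ Z).hom := by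
  subst h
  rw [comp_whiskerRight, associator_inv_naturality_middle_assoc, Category.assoc,
    ← comp_whiskerRight_assoc, ← whiskerLeft_comp, IsIso.inv_hom_id, whiskerLeft_id,
    id_whiskerRight, Category.id_comp]

def Adjunction.precompAdjunction (adj : Bicategory.Adjunction Y X) (d : B) :
    precompF X d ⊣ precompF Y d where
  unit :=
    { app := fun Z => (λ_ Z).inv ≫ adj.unit ▷ Z ≫ (α_ Y X Z).hom
      naturality := fun Z Z' θ => by
        dsimp [precompF]
        simp only [leftUnitor_inv_naturality_assoc, whisker_exchange_assoc,
          associator_naturality_right, Category.assoc] }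
  counit :=
    { app := fun W => (α_ X Y W).inv ≫ adj.counit ▷ W ≫ (λ_ W).hom
      naturality := fun W W' θ => by
        dsimp [precompF]
        simp only [associator_inv_naturality_right_assoc, whisker_exchange_assoc,
          leftUnitor_naturality, Category.assoc] }
  left_triangle_components := fun Z => by
    dsimp
    calc X ◁ ((λ_ Z).inv ≫ adj.unit ▷ Z ≫ (α_ Y X Z).hom) ≫
          (α_ X Y (X ≫ Z)).inv ≫ adj.counit ▷ (X ≫ Z) ≫ (λ_ (X ≫ Z)).hom
        = 𝟙 (X ≫ Z) ⊗≫ rightZigzag adj.unit adj.counit ▷ Z ⊗≫ 𝟙 (X ≫ Z) := by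
          bicategory
      _ = 𝟙 (X ≫ Z) := by rw [adj.right_triangle]; bicategory
  right_triangle_components := fun W => by
    dsimp
    calc ((λ_ (Y ≫ W)).inv ≫ adj.unit ▷ (Y ≫ W) ≫ (α_ Y X (Y ≫ W)).hom) ≫
          Y ◁ ((α_ X Y W).inv ≫ adj.counit ▷ W ≫ (λ_ W).hom)
        = 𝟙 (Y ≫ W) ⊗≫ leftZigzag adj.unit adj.counit ▷ W ⊗≫ 𝟙 (Y ≫ W) := by
          bicategory
      _ = 𝟙 (Y ≫ W) := by rw [adj.left_triangle]; bicategory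

theorem Adjunction.precompAdjunction_homEquiv_counit (adj : Bicategory.Adjunction Y X) :
    (adj.precompAdjunction b).homEquiv Y (𝟙 b) adj.counit = (ρ_ Y).inv := by
  refine (CategoryTheory.Adjunction.homEquiv_unit _ _ _ _).trans ?_
  dsimp [precompAdjunction]
  calc ((λ_ Y).inv ≫ adj.unit ▷ Y ≫ (α_ Y X Y).hom) ≫ Y ◁ adj.counit
      = 𝟙 Y ⊗≫ leftZigzag adj.unit adj.counit ⊗≫ 𝟙 (Y ≫ 𝟙 b) := by bicategory
    _ = (ρ_ Y).inv := by rw [adj.left_triangle]; bicategory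

theorem Adjunction.precompAdjunction_homEquiv_counit_whiskerRight
    (adj : Bicategory.Adjunction Y X) {d : B} (Z : b ⟶ d) :
    (adj.precompAdjunction d).homEquiv (Y ≫ Z) Z
      ((α_ X Y Z).inv ≫ adj.counit ▷ Z ≫ (λ_ Z).hom) = 𝟙 (Y ≫ Z) :=
  (adj.precompAdjunction d).right_triangle_components Z

end CategoryTheory.Bicategory

theorem dualizable_dual_is_internal_hom
    {a b : B} (X : b ⟶ a) (Y : a ⟶ b)
    (adj : Bicategory.Adjunction Y X)
    -- the closed structure: right adjoints `(X ▷ −)` for precomposition with `X`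
    (rt : ∀ d : B, (b ⟶ d) ⥤ (a ⟶ d))
    (adjs : ∀ d : B, precompF X d ⊣ rt d) :
    -- (1) the canonical map `Y ⟶ X ▷ id_B`, the adjunct of the counit `ε : X ≫ Y ⟶ 𝟙 b`,
    -- is an isomorphism
    IsIso ((adjs b).homEquiv Y (𝟙 b) adj.counit) ∧
    -- (2) for every `Z : b ⟶ d`, the canonical 2-cell `Z ⊙ (X ▷ id_B) ⟶ X ▷ Z` is an iso
    (∀ (d : B) (Z : b ⟶ d),
      IsIso ((adjs d).homEquiv ((rt b).obj (𝟙 b) ≫ Z) Z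
        ((α_ X ((rt b).obj (𝟙 b)) Z).inv ≫ ((adjs b).counit.app (𝟙 b) ▷ Z) ≫ (λ_ Z).hom))) := by
  set f := (adjs b).homEquiv Y (𝟙 b) adj.counit
  have hf : IsIso f := (Adjunction.isIso_homEquiv_iff _ (adj.precompAdjunction b) _).2 <| by
    rw [adj.precompAdjunction_homEquiv_counit]
    exact (ρ_ Y).isIso_inv
  refine ⟨hf, fun d Z => ?_⟩
  have hε : X ◁ f ≫ (adjs b).counit.app (𝟙 b) = adj.counit :=
    ((adjs b).homEquiv_counit (g := f)).symm.trans (((adjs b).homEquiv _ _).symm_apply_apply _)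
  have h₀ : IsIso ((adjs d).homEquiv (Y ≫ Z) Z ((α_ X Y Z).inv ≫ adj.counit ▷ Z ≫ (λ_ Z).hom)) :=
    (Adjunction.isIso_homEquiv_iff _ (adj.precompAdjunction d) _).2 <| by
      rw [adj.precompAdjunction_homEquiv_counit_whiskerRight]
      exact IsIso.id _
  -- `rw` cannot match through the objects of `precompF` here, so the equation is transported
  -- with `congrArg` instead.
  have hnat := (congrArg ((adjs d).homEquiv _ Z)
    (associator_inv_whiskerRight_leftUnitor_of_whiskerLeft_comp_eq f hε Z)).trans
    ((adjs d).homEquiv_naturality_left _ _)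
  exact (congrArg IsIso hnat).mpr (IsIso.comp_isIso' (whiskerRight_isIso _ _) h₀)
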